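/- In LR-ending partisan games the natural partial order is trivial: for any positions G and H, it is not the case that G > H. Consequently any two positions are either equivalent or incomparable. -/
import Mathlib


/-- Positions of LR-ending partisan games: two terminals and finite option sets
(represented as lists; set-like behavior is captured by the `Iso` relation). -/
inductive Pos : Type
  | termL : Pos
  | termR : Pos
  | opts : List Pos → Pos

namespace Pos

/-- Valid positions: every non-terminal position has a nonempty set of options. -/
inductive Valid : Pos → Prop
  | termL : Valid termL
  | termR : Valid termR
  | opts : ∀ gs : List Pos, gs ≠ [] → (∀ g ∈ gs, Valid g) → Valid (opts gs)

/-- Disjunctive sum. -/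
def sum : Pos → Pos → Pos
  | termL, termL => termL
  | termL, termR => termR
  | termR, termL => termR
  | termR, termR => termL
  | termL, opts hs => opts (hs.attach.map (fun h => sum termL h.1))
  | termR, opts hs => opts (hs.attach.map (fun h => sum termR h.1))
  | opts gs, termL => opts (gs.attach.map (fun g => sum g.1 termL))
  | opts gs, termR => opts (gs.attach.map (fun g => sum g.1 termR))
  | opts gs, opts hs =>
      opts (gs.attach.map (fun g => sum g.1 (opts hs)) ++
            hs.attach.map (fun h => sum (opts gs) h.1))
termination_by g h => sizeOf g + sizeOf h
decreasing_by
  all_goals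
    first
      | (have := List.sizeOf_lt_of_mem h.2; simp_all; omega)
      | (have := List.sizeOf_lt_of_mem g.2; simp_all; omega)

/-- Conjugate: swap the two kinds of terminal positions. -/
def conj : Pos → Pos
  | termL => termR
  | termR => termL
  | opts gs => opts (gs.attach.map (fun g => conj g.1))
decreasing_by
  have := List.sizeOf_lt_of_mem g.2; simp_all; omega

/-- Isomorphism of game trees (positions viewed as sets of options). -/
def Iso : Pos → Pos → Prop
  | termL, termL => True
  | termR, termR => True
  | opts gs, opts hs =>
      (∀ g ∈ gs.attach, ∃ h ∈ hs.attach, Iso g.1 h.1) ∧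
      (∀ h ∈ hs.attach, ∃ g ∈ gs.attach, Iso g.1 h.1)
  | _, _ => False
termination_by g h => sizeOf g + sizeOf h
decreasing_by
  all_goals
    (have hg := List.sizeOf_lt_of_mem g.2; have hh := List.sizeOf_lt_of_mem h.2;
     simp_all; omega)

inductive Player : Type
  | left : Player
  | right : Player
  deriving DecidableEq

/-- `Wins p b G` : player `p` has a winning strategy from position `G`,
where `b = true` means it is `p`'s turn to move and `b = false` means the
opponent is to move.  A terminal position is won by the player given by
its label, regardless of whose turn it is. -/
inductive Wins : Player → Bool → Pos → Prop
  | termL : ∀ b, Wins Player.left b termL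
  | termR : ∀ b, Wins Player.right b termR
  | move : ∀ (p : Player) (gs : List Pos) (g : Pos), g ∈ gs →
      Wins p false g → Wins p true (opts gs)
  | wait : ∀ (p : Player) (gs : List Pos),
      (∀ g, g ∈ gs → Wins p true g) → Wins p false (opts gs)

inductive Outcome : Type
  | L : Outcome
  | R : Outcome
  | N : Outcome
  | P : Outcome
  deriving DecidableEq

/-- The outcome of a position. -/
noncomputable def outcome (G : Pos) : Outcome := by
  classical
  exact
    if Wins Player.left true G then
      if Wins Player.left false G then Outcome.L else Outcome.N
    else
      if Wins Player.left false G then Outcome.P else Outcome.R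

/-- Equivalence of positions: the outcome agrees in every (valid) context. -/
def equiv (G H : Pos) : Prop :=
  ∀ X : Pos, Valid X → outcome (sum G X) = outcome (sum H X)

end Pos

namespace Pos

/-- The partial order on outcomes: `L > P > R`, `L > N > R`, with `P` and `N`
incomparable. -/
def Outcome.le (a b : Outcome) : Prop := a = b ∨ a = Outcome.R ∨ b = Outcome.L

/-- `G ≥ H` : the outcome of `G + X` is at least that of `H + X` in every context. -/
def ge (G H : Pos) : Prop :=
  ∀ X : Pos, X.Valid → Outcome.le (outcome (sum H X)) (outcome (sum G X))

end Pos

namespace Pos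

/-- Swap players. -/
def op : Player → Player
  | .left => .right
  | .right => .left

lemma wins_termL {p : Player} {b : Bool} : Wins p b termL ↔ p = .left := by
  constructor
  · intro h; cases h; rfl
  · rintro rfl; exact .termL b

lemma wins_termR {p : Player} {b : Bool} : Wins p b termR ↔ p = .right := by
  constructor
  · intro h; cases h; rfl
  · rintro rfl; exact .termR b

lemma wins_opts_true {p : Player} {gs : List Pos} :
    Wins p true (opts gs) ↔ ∃ g ∈ gs, Wins p false g := by
  constructor
  · intro h; cases h with
    | move _ _ g hg hw => exact ⟨g, hg, hw⟩
  · rintro ⟨g, hg, hw⟩; exact .move p gs g hg hw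

lemma wins_opts_false {p : Player} {gs : List Pos} :
    Wins p false (opts gs) ↔ ∀ g ∈ gs, Wins p true g := by
  constructor
  · intro h; cases h with
    | wait _ _ h => exact h
  · intro h; exact .wait p gs h

lemma wins_opts_congr (f : Player → Player) (gs hs : List Pos)
    (h1 : ∀ g ∈ gs, ∃ h ∈ hs, ∀ p b, (Wins p b g ↔ Wins (f p) b h))
    (h2 : ∀ h ∈ hs, ∃ g ∈ gs, ∀ p b, (Wins p b g ↔ Wins (f p) b h)) :
    ∀ (p : Player) (b : Bool), (Wins p b (opts gs) ↔ Wins (f p) b (opts hs)) := by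
  intro p b
  cases b with
  | true =>
    simp only [wins_opts_true]
    constructor
    · rintro ⟨g, hg, hw⟩
      obtain ⟨h, hh, hiff⟩ := h1 g hg
      exact ⟨h, hh, (hiff p false).1 hw⟩
    · rintro ⟨h, hh, hw⟩
      obtain ⟨g, hg, hiff⟩ := h2 h hh
      exact ⟨g, hg, (hiff p false).2 hw⟩
  | false =>
    simp only [wins_opts_false]
    constructor
    · intro hw h hh
      obtain ⟨g, hg, hiff⟩ := h2 h hh
      exact (hiff p true).1 (hw g hg)
    · intro hw g hg
      obtain ⟨h, hh, hiff⟩ := h1 g hg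
      exact (hiff p true).2 (hw h hh)

theorem wins_sum_termR : ∀ (G X : Pos) (p : Player) (b : Bool),
    Wins p b (G.sum (X.sum termR)) ↔ Wins (op p) b (G.sum X)
  | termL, termL, p, b => by
    simp only [sum]; cases p <;> simp [wins_termL, wins_termR, op]
  | termL, termR, p, b => by
    simp only [sum]; cases p <;> simp [wins_termL, wins_termR, op]
  | termR, termL, p, b => by
    simp only [sum]; cases p <;> simp [wins_termL, wins_termR, op]
  | termR, termR, p, b => by
    simp only [sum]; cases p <;> simp [wins_termL, wins_termR, op]
  | termL, opts hs, p, b => by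
    simp only [sum]
    refine wins_opts_congr op _ _ ?_ ?_ p b
    · intro g hg
      simp only [List.mem_map, List.mem_attach, true_and, Subtype.exists] at hg
      obtain ⟨h0, hmem0, rfl⟩ := hg
      obtain ⟨h1, hmem, rfl⟩ := hmem0
      refine ⟨sum termL h1, ?_, fun p b => wins_sum_termR termL h1 p b⟩
      simp only [List.mem_map, List.mem_attach, true_and, Subtype.exists]
      exact ⟨h1, hmem, rfl⟩
    · intro h hh
      simp only [List.mem_map, List.mem_attach, true_and, Subtype.exists] at hh
      obtain ⟨h0, hmem, rfl⟩ := hh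
      refine ⟨sum termL (sum h0 termR), ?_, fun p b => wins_sum_termR termL h0 p b⟩
      simp only [List.mem_map, List.mem_attach, true_and, Subtype.exists]
      exact ⟨sum h0 termR, ⟨h0, hmem, rfl⟩, rfl⟩
  | termR, opts hs, p, b => by
    simp only [sum]
    refine wins_opts_congr op _ _ ?_ ?_ p b
    · intro g hg
      simp only [List.mem_map, List.mem_attach, true_and, Subtype.exists] at hg
      obtain ⟨h0, hmem0, rfl⟩ := hg
      obtain ⟨h1, hmem, rfl⟩ := hmem0
      refine ⟨sum termR h1, ?_, fun p b => wins_sum_termR termR h1 p b⟩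
      simp only [List.mem_map, List.mem_attach, true_and, Subtype.exists]
      exact ⟨h1, hmem, rfl⟩
    · intro h hh
      simp only [List.mem_map, List.mem_attach, true_and, Subtype.exists] at hh
      obtain ⟨h0, hmem, rfl⟩ := hh
      refine ⟨sum termR (sum h0 termR), ?_, fun p b => wins_sum_termR termR h0 p b⟩
      simp only [List.mem_map, List.mem_attach, true_and, Subtype.exists]
      exact ⟨sum h0 termR, ⟨h0, hmem, rfl⟩, rfl⟩
  | opts gs, termL, p, b => by
    have e : sum termL termR = termR := by simp [sum]
    simp only [sum]
    refine wins_opts_congr op _ _ ?_ ?_ p b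
    · intro g hg
      simp only [List.mem_map, List.mem_attach, true_and, Subtype.exists] at hg
      obtain ⟨g0, hmem, rfl⟩ := hg
      have hiff := fun p b => wins_sum_termR g0 termL p b
      rw [e] at hiff
      refine ⟨sum g0 termL, ?_, hiff⟩
      simp only [List.mem_map, List.mem_attach, true_and, Subtype.exists]
      exact ⟨g0, hmem, rfl⟩
    · intro h hh
      simp only [List.mem_map, List.mem_attach, true_and, Subtype.exists] at hh
      obtain ⟨g0, hmem, rfl⟩ := hh
      have hiff := fun p b => wins_sum_termR g0 termL p b
      rw [e] at hiff
      refine ⟨sum g0 termR, ?_, hiff⟩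
      simp only [List.mem_map, List.mem_attach, true_and, Subtype.exists]
      exact ⟨g0, hmem, rfl⟩
  | opts gs, termR, p, b => by
    have e : sum termR termR = termL := by simp [sum]
    simp only [sum]
    refine wins_opts_congr op _ _ ?_ ?_ p b
    · intro g hg
      simp only [List.mem_map, List.mem_attach, true_and, Subtype.exists] at hg
      obtain ⟨g0, hmem, rfl⟩ := hg
      have hiff := fun p b => wins_sum_termR g0 termR p b
      rw [e] at hiff
      refine ⟨sum g0 termR, ?_, hiff⟩
      simp only [List.mem_map, List.mem_attach, true_and, Subtype.exists]
      exact ⟨g0, hmem, rfl⟩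
    · intro h hh
      simp only [List.mem_map, List.mem_attach, true_and, Subtype.exists] at hh
      obtain ⟨g0, hmem, rfl⟩ := hh
      have hiff := fun p b => wins_sum_termR g0 termR p b
      rw [e] at hiff
      refine ⟨sum g0 termL, ?_, hiff⟩
      simp only [List.mem_map, List.mem_attach, true_and, Subtype.exists]
      exact ⟨g0, hmem, rfl⟩
  | opts gs, opts hs, p, b => by
    have e : sum (opts hs) termR = opts (hs.attach.map (fun h => sum h.1 termR)) := by
      simp [sum]
    rw [e]
    simp only [sum]
    refine wins_opts_congr op _ _ ?_ ?_ p b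
    · intro g hg
      simp only [List.mem_append, List.mem_map, List.mem_attach, true_and,
        Subtype.exists] at hg
      rcases hg with ⟨g0, hmem, rfl⟩ | ⟨h0, hmem, rfl⟩
      · have hiff := fun p b => wins_sum_termR g0 (opts hs) p b
        rw [e] at hiff
        refine ⟨sum g0 (opts hs), ?_, hiff⟩
        simp only [List.mem_append, List.mem_map, List.mem_attach, true_and,
          Subtype.exists]
        exact Or.inl ⟨g0, hmem, rfl⟩
      · obtain ⟨h1, hmem, rfl⟩ := hmem
        refine ⟨sum (opts gs) h1, ?_, fun p b => wins_sum_termR (opts gs) h1 p b⟩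
        simp only [List.mem_append, List.mem_map, List.mem_attach, true_and,
          Subtype.exists]
        exact Or.inr ⟨h1, hmem, rfl⟩
    · intro h hh
      simp only [List.mem_append, List.mem_map, List.mem_attach, true_and,
        Subtype.exists] at hh
      rcases hh with ⟨g0, hmem, rfl⟩ | ⟨h0, hmem, rfl⟩
      · have hiff := fun p b => wins_sum_termR g0 (opts hs) p b
        rw [e] at hiff
        refine ⟨sum g0 (opts (hs.attach.map (fun h => sum h.1 termR))), ?_, hiff⟩
        simp only [List.mem_append, List.mem_map, List.mem_attach, true_and,
          Subtype.exists]
        exact Or.inl ⟨g0, hmem, rfl⟩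
      · refine ⟨sum (opts gs) (sum h0 termR), ?_, fun p b => wins_sum_termR (opts gs) h0 p b⟩
        simp only [List.mem_append, List.mem_map, List.mem_attach, true_and,
          Subtype.exists]
        exact Or.inr ⟨sum h0 termR, ⟨h0, hmem, rfl⟩, rfl⟩
termination_by G X => sizeOf G + sizeOf X
decreasing_by
  all_goals (first
    | (have := List.sizeOf_lt_of_mem hmem; simp_all; omega)
    | simp_all)


theorem wins_not : ∀ (Y : Pos) (p : Player) (b : Bool),
    Wins p b Y ↔ ¬ Wins (op p) (!b) Y
  | termL, p, b => by cases p <;> simp [wins_termL, wins_termR, op]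
  | termR, p, b => by cases p <;> simp [wins_termL, wins_termR, op]
  | opts gs, p, b => by
    cases b with
    | true =>
      simp only [Bool.not_true, wins_opts_true, wins_opts_false]
      constructor
      · rintro ⟨g, hmem, hw⟩ hall
        exact (wins_not g p false).1 hw (hall g hmem)
      · intro h
        by_contra hne
        push_neg at hne
        apply h
        intro g hmem
        by_contra hng
        exact hne g hmem ((wins_not g p false).2 hng)
    | false =>
      simp only [Bool.not_false, wins_opts_true, wins_opts_false]
      constructor
      · rintro hall ⟨g, hmem, hw⟩
        exact (wins_not g p true).1 (hall g hmem) hw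
      · intro h g hmem
        exact (wins_not g p true).2 (fun hw => h ⟨g, hmem, hw⟩)
termination_by Y => sizeOf Y
decreasing_by
  all_goals (have := List.sizeOf_lt_of_mem hmem; simp_all; omega)


/-- Swap of outcomes. -/
def oswap : Outcome → Outcome
  | .L => .R
  | .R => .L
  | .N => .N
  | .P => .P

lemma outcome_swap (G X : Pos) :
    outcome (G.sum (X.sum termR)) = oswap (outcome (G.sum X)) := by
  have h1 : Wins .left true (G.sum (X.sum termR)) ↔ ¬ Wins .left false (G.sum X) := by
    rw [wins_sum_termR]
    simpa [op] using wins_not (G.sum X) .right true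
  have h2 : Wins .left false (G.sum (X.sum termR)) ↔ ¬ Wins .left true (G.sum X) := by
    rw [wins_sum_termR]
    simpa [op] using wins_not (G.sum X) .right false
  unfold outcome
  by_cases A : Wins .left true (G.sum X) <;> by_cases B : Wins .left false (G.sum X) <;>
    simp [h1, h2, A, B, oswap]

lemma valid_sum_termR {X : Pos} (hX : Valid X) : Valid (X.sum termR) := by
  induction hX with
  | termL => simp only [sum]; exact Valid.termR
  | termR => simp only [sum]; exact Valid.termL
  | opts gs hne hv ih =>
    simp only [sum]
    apply Valid.opts
    · simp [hne]
    · intro g hg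
      simp only [List.mem_map, List.mem_attach, true_and, Subtype.exists] at hg
      obtain ⟨a, ha, rfl⟩ := hg
      exact ih a ha

lemma oswap_le {a b : Outcome} (h : Outcome.le (oswap a) (oswap b)) :
    Outcome.le b a := by
  cases a <;> cases b <;> simp_all [Outcome.le, oswap]

lemma le_antisymm' {a b : Outcome} (h1 : Outcome.le a b) (h2 : Outcome.le b a) :
    a = b := by
  cases a <;> cases b <;> simp_all [Outcome.le]

lemma ge_symm {G H : Pos} (h : ge G H) : ge H G := by
  intro X hX
  have h' := h (X.sum termR) (valid_sum_termR hX)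
  rw [outcome_swap, outcome_swap] at h'
  exact oswap_le h'

end Pos

/-- no position is strictly greater than another; hence any two
positions are either equivalent or incomparable. -/
theorem no_strict_order (G H : Pos) (hG : G.Valid) (hH : H.Valid) :
    ¬ (Pos.ge G H ∧ ¬ Pos.ge H G) ∧
    (Pos.equiv G H ∨ (¬ Pos.ge G H ∧ ¬ Pos.ge H G)) := by
  constructor
  · rintro ⟨h1, h2⟩; exact h2 (Pos.ge_symm h1)
  · by_cases h : Pos.ge G H
    · exact Or.inl fun X hX => Pos.le_antisymm' (Pos.ge_symm h X hX) (h X hX)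
    · exact Or.inr ⟨h, fun h' => h (Pos.ge_symm h')⟩
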